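/- arXiv:2603.21500 — 4 statements merged into one kernel-verified Lean document; each statement's English description precedes it below -/
import Mathlib

section
/- Let K be a proper cone with ν-regular barrier F (logarithmically homogeneous self-concordant barrier with parameter ν). Fix x̄ ∈ int K and define Δ(x̄) = {x ∈ int K : ⟨∇F(x̄), x − x̄⟩ ≥ 0}. Then for every x ∈ Δ(x̄), the local norm satisfies ‖x‖_{x̄} := ⟨∇²F(x̄) x, x⟩^{1/2} ≤ ν. -/
open RealInnerProductSpace Gradient

/-- A proper cone: closed, convex, pointed cone with nonempty interior. -/
structure IsProperCone {E : Type*} [NormedAddCommGroup E] [InnerProductSpace ℝ E] [CompleteSpace E]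
    (K : Set E) : Prop where
  closed : IsClosed K
  convex : Convex ℝ K
  cone : ∀ (t : ℝ), 0 < t → ∀ x ∈ K, t • x ∈ K
  pointed : K ∩ (-K) ⊆ {0}
  int_nonempty : (interior K).Nonempty

/-- A `ν`-regular barrier for a proper cone `K`: a logarithmically homogeneous
self-concordant barrier with parameter `ν` on `int K`. -/
structure IsRegularBarrier {E : Type*} [NormedAddCommGroup E] [InnerProductSpace ℝ E] [CompleteSpace E]
    (K : Set E) (F : E → ℝ) (ν : ℝ) : Prop where
  smooth : ContDiffOn ℝ 3 F (interior K)
  convexOn : ConvexOn ℝ (interior K) F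
  selfConcordant : ∀ x ∈ interior K, ∀ h : E,
    (iteratedFDeriv ℝ 3 F x) (fun _ => h) ≤
      2 * ((iteratedFDeriv ℝ 2 F x) (fun _ => h)) ^ ((3 : ℝ) / 2)
  posDef : ∀ x ∈ interior K, ∀ h : E, h ≠ 0 → 0 < ⟪fderiv ℝ (∇ F) x h, h⟫
  barrier : ∀ x ∈ interior K, ∀ h : E, ⟪∇ F x, h⟫ ^ 2 ≤ ν * ⟪fderiv ℝ (∇ F) x h, h⟫
  nu_ge_one : 1 ≤ ν
  loghom : ∀ x ∈ interior K, ∀ (τ : ℝ), 0 < τ → F (τ • x) = F x - ν * Real.log τ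

section Auxiliary

open Set Filter InnerProductSpace

/-- Pure one-dimensional analysis along a ray: the barrier inequality forces `φ ≤ 0`
on `[0, ∞)`, and self-concordance then forces `√(ψ 0) ≤ -φ 0`. -/
private lemma ray_analysis (φ ψ χ : ℝ → ℝ) (ν : ℝ) (hν1 : 1 ≤ ν)
    (hφd : ∀ t, 0 ≤ t → HasDerivAt φ (ψ t) t)
    (hψd : ∀ t, 0 ≤ t → HasDerivAt ψ (χ t) t)
    (hψpos : ∀ t, 0 ≤ t → 0 < ψ t)
    (hbar : ∀ t, 0 ≤ t → φ t ^ 2 ≤ ν * ψ t)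
    (hχ : ∀ t, 0 ≤ t → -(2 * Real.sqrt (ψ t) ^ 3) ≤ χ t) :
    Real.sqrt (ψ 0) ≤ -φ 0 := by
  have hν : (0:ℝ) < ν := lt_of_lt_of_le one_pos hν1
  -- Step A : φ ≤ 0 on [0, ∞)
  have hφmono : MonotoneOn φ (Ici (0:ℝ)) := by
    apply monotoneOn_of_hasDerivWithinAt_nonneg (convex_Ici 0)
      (fun t ht => (hφd t ht).continuousAt.continuousWithinAt)
      (f' := ψ)
    · intro t ht
      rw [interior_Ici] at ht
      exact ((hφd t (le_of_lt ht)).hasDerivWithinAt)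
    · intro t ht
      rw [interior_Ici] at ht
      exact (hψpos t (le_of_lt ht)).le
  have hφnonpos : ∀ t, 0 ≤ t → φ t ≤ 0 := by
    by_contra hcon
    push_neg at hcon
    obtain ⟨t₀, ht₀, hpos⟩ := hcon
    set c := φ t₀ with hc
    have hφc : ∀ t, t₀ ≤ t → c ≤ φ t := fun t h =>
      hφmono (mem_Ici.2 ht₀) (mem_Ici.2 (le_trans ht₀ h)) h
    set T := t₀ + 2 * ν / c with hT
    have hTpos : t₀ < T := by
      have h : 0 < 2 * ν / c := by positivity
      show t₀ < t₀ + 2 * ν / c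
      linarith
    set w : ℝ → ℝ := fun t => ν * (φ t)⁻¹ + t with hw
    have hwd : ∀ t, 0 ≤ t → 0 < φ t →
        HasDerivAt w (ν * (-(ψ t) / (φ t) ^ 2) + 1) t := by
      intro t h0t hφt
      have h1 : HasDerivAt (fun t => (φ t)⁻¹) (-(ψ t) / (φ t) ^ 2) t :=
        (hφd t h0t).inv hφt.ne'
      exact (h1.const_mul ν).add (hasDerivAt_id t)
    have hwanti : AntitoneOn w (Icc t₀ T) := by
      apply antitoneOn_of_hasDerivWithinAt_nonpos (convex_Icc t₀ T)
        (f' := fun t => ν * (-(ψ t) / (φ t) ^ 2) + 1)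
      · intro t ht
        have hφt : 0 < φ t := lt_of_lt_of_le hpos (hφc t ht.1)
        exact (hwd t (le_trans ht₀ ht.1) hφt).continuousAt.continuousWithinAt
      · intro t ht
        rw [interior_Icc] at ht
        have hφt : 0 < φ t := lt_of_lt_of_le hpos (hφc t ht.1.le)
        exact (hwd t (le_trans ht₀ ht.1.le) hφt).hasDerivWithinAt
      · intro t ht
        rw [interior_Icc] at ht
        have h0t : 0 ≤ t := le_trans ht₀ ht.1.le
        have hφt : 0 < φ t := lt_of_lt_of_le hpos (hφc t ht.1.le)
        have hb := hbar t h0t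
        have h2 : (0:ℝ) < φ t ^ 2 := by positivity
        have h3 : 1 ≤ ν * ψ t / φ t ^ 2 := (one_le_div h2).2 hb
        have h4 : ν * (-(ψ t) / φ t ^ 2) = -(ν * ψ t / φ t ^ 2) := by ring
        linarith
    have hwT : w T ≤ w t₀ := hwanti (mem_Icc.2 ⟨le_refl t₀, hTpos.le⟩)
      (mem_Icc.2 ⟨hTpos.le, le_refl T⟩) hTpos.le
    have hφT : 0 < φ T := lt_of_lt_of_le hpos (hφc T hTpos.le)
    have hwT' : ν * (φ T)⁻¹ + T ≤ ν * c⁻¹ + t₀ := hwT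
    have hTeq : T = t₀ + 2 * ν / c := hT
    have hpos1 : 0 < ν * (φ T)⁻¹ := mul_pos hν (inv_pos.2 hφT)
    have hpos2 : 0 < ν * c⁻¹ := mul_pos hν (inv_pos.2 hpos)
    have hconv : 2 * ν / c = 2 * (ν * c⁻¹) := by ring
    linarith
  -- Step B
  have hψ0 : 0 < ψ 0 := hψpos 0 le_rfl
  set s0 := Real.sqrt (ψ 0) with hs0def
  have hs0 : 0 < s0 := Real.sqrt_pos.2 hψ0
  set u0 := s0⁻¹ with hu0def
  have hu0 : 0 < u0 := by positivity
  have hsq : ∀ t, 0 ≤ t → 0 < Real.sqrt (ψ t) := fun t ht => Real.sqrt_pos.2 (hψpos t ht)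
  -- B1 : lower bound on ψ
  set Bf : ℝ → ℝ := fun t => u0 + t - (Real.sqrt (ψ t))⁻¹ with hBf
  have hBd : ∀ t, 0 ≤ t → HasDerivAt Bf
      (1 - (-(χ t / (2 * Real.sqrt (ψ t))) / (Real.sqrt (ψ t)) ^ 2)) t := by
    intro t h0t
    have h1 : HasDerivAt (fun t => Real.sqrt (ψ t))
        (χ t / (2 * Real.sqrt (ψ t))) t := (hψd t h0t).sqrt (hψpos t h0t).ne'
    have h2 := h1.inv (hsq t h0t).ne'
    have h3 : HasDerivAt (fun s : ℝ => u0 + s) 1 t := (hasDerivAt_id t).const_add u0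
    exact h3.sub h2
  have hBmono : MonotoneOn Bf (Ici (0:ℝ)) := by
    apply monotoneOn_of_hasDerivWithinAt_nonneg (convex_Ici 0)
      (fun t ht => (hBd t ht).continuousAt.continuousWithinAt)
      (f' := fun t => 1 - (-(χ t / (2 * Real.sqrt (ψ t))) / (Real.sqrt (ψ t)) ^ 2))
    · intro t ht
      rw [interior_Ici] at ht
      exact (hBd t ht.le).hasDerivWithinAt
    · intro t ht
      rw [interior_Ici] at ht
      have h0t : 0 ≤ t := ht.le
      have hstpos : 0 < Real.sqrt (ψ t) := hsq t h0t
      have hχt := hχ t h0t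
      have h5 : -(Real.sqrt (ψ t) ^ 2) ≤ χ t / (2 * Real.sqrt (ψ t)) := by
        rw [le_div_iff₀ (by positivity)]
        nlinarith
      have h6 : -(χ t / (2 * Real.sqrt (ψ t))) / Real.sqrt (ψ t) ^ 2 ≤ 1 := by
        rw [div_le_one (by positivity)]
        linarith
      linarith
  have hlow : ∀ t, 0 ≤ t → ((u0 + t)⁻¹) ^ 2 ≤ ψ t := by
    intro t ht
    have hB0 : Bf 0 = 0 := by
      simp [hBf, hu0def, hs0def]
    have hBt : 0 ≤ Bf t := by
      rw [← hB0]; exact hBmono (mem_Ici.2 le_rfl) (mem_Ici.2 ht) ht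
    have h1 : (Real.sqrt (ψ t))⁻¹ ≤ u0 + t := by
      have heq : Bf t = u0 + t - (Real.sqrt (ψ t))⁻¹ := rfl
      rw [heq] at hBt
      linarith
    have h2 : (u0 + t)⁻¹ ≤ Real.sqrt (ψ t) := by
      rw [← inv_inv (Real.sqrt (ψ t))]
      exact inv_anti₀ (inv_pos.2 (hsq t ht)) h1
    calc ((u0 + t)⁻¹) ^ 2 ≤ (Real.sqrt (ψ t)) ^ 2 :=
          pow_le_pow_left₀ (by positivity) h2 2
      _ = ψ t := Real.sq_sqrt (hψpos t ht).le
  -- B2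
  set A : ℝ → ℝ := fun t => φ t + (u0 + t)⁻¹ with hA
  have hAd : ∀ t, 0 ≤ t → HasDerivAt A (ψ t + -1 / (u0 + t) ^ 2) t := by
    intro t ht
    have h0 : (0:ℝ) < u0 + t := by linarith
    have h3 : HasDerivAt (fun s : ℝ => u0 + s) 1 t := (hasDerivAt_id t).const_add u0
    have h4 := h3.inv h0.ne'
    exact (hφd t ht).add h4
  have hAmono : MonotoneOn A (Ici (0:ℝ)) := by
    apply monotoneOn_of_hasDerivWithinAt_nonneg (convex_Ici 0)
      (fun t ht => (hAd t ht).continuousAt.continuousWithinAt)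
      (f' := fun t => ψ t + -1 / (u0 + t) ^ 2)
    · intro t ht
      rw [interior_Ici] at ht
      exact (hAd t ht.le).hasDerivWithinAt
    · intro t ht
      rw [interior_Ici] at ht
      have h6 := hlow t ht.le
      have h0 : (0:ℝ) < u0 + t := by linarith [(mem_Ioi.1 ht).le]
      have h7 : ((u0 + t)⁻¹) ^ 2 = -(-1 / (u0 + t) ^ 2) := by
        rw [inv_pow]; field_simp
      linarith
  have hfinal : ∀ t, 0 ≤ t → s0 + φ 0 ≤ (u0 + t)⁻¹ := by
    intro t ht
    have h1 : A 0 ≤ A t := hAmono (mem_Ici.2 le_rfl) (mem_Ici.2 ht) ht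
    have h2 : A 0 = φ 0 + s0 := by
      simp only [hA, add_zero, hu0def, inv_inv]
    have h4 : A t = φ t + (u0 + t)⁻¹ := rfl
    have h3 : φ t ≤ 0 := hφnonpos t ht
    rw [h2, h4] at h1
    linarith
  have hTd : Tendsto (fun t : ℝ => (u0 + t)⁻¹) atTop (nhds 0) :=
    tendsto_inv_atTop_zero.comp (tendsto_atTop_add_const_left _ u0 tendsto_id)
  have hle : s0 + φ 0 ≤ 0 :=
    ge_of_tendsto hTd (eventually_atTop.2 ⟨0, fun t ht => hfinal t ht⟩)
  linarith

variable {E : Type*} [NormedAddCommGroup E] [InnerProductSpace ℝ E] [FiniteDimensional ℝ E]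

/-- An interior point of a convex cone plus a cone element stays in the interior. -/
private lemma add_mem_interior_of_cone {K : Set E} (hconv : Convex ℝ K)
    (hcone : ∀ t : ℝ, 0 < t → ∀ x ∈ K, t • x ∈ K)
    {u k : E} (hu : u ∈ interior K) (hk : k ∈ K) : u + k ∈ interior K := by
  have hKK : ∀ a ∈ K, ∀ b ∈ K, a + b ∈ K := by
    intro a ha b hb
    have h2 : (2 : ℝ) • ((1/2 : ℝ) • a + (1/2 : ℝ) • b) ∈ K :=
      hcone 2 two_pos _ (hconv ha hb (by norm_num) (by norm_num) (by norm_num))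
    have h3 : (2 : ℝ) • ((1/2 : ℝ) • a + (1/2 : ℝ) • b) = a + b := by
      rw [smul_add, smul_smul, smul_smul]; norm_num
    rwa [h3] at h2
  have hopen : IsOpen ((fun y => y + k) '' interior K) :=
    (isOpenMap_add_right k) _ isOpen_interior
  have hsub : (fun y => y + k) '' interior K ⊆ K := by
    rintro _ ⟨z, hz, rfl⟩
    exact hKK z (interior_subset hz) k hk
  exact interior_maximal hsub hopen ⟨u, hu, rfl⟩

/-- Euler identity for a logarithmically homogeneous function: `⟪∇F y, y⟫ = -ν`. -/
private lemma euler_identity {K : Set E} (F : E → ℝ) (ν : ℝ)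
    (hsm : ContDiffOn ℝ 3 F (interior K))
    (hlh : ∀ x ∈ interior K, ∀ τ : ℝ, 0 < τ → F (τ • x) = F x - ν * Real.log τ)
    {y : E} (hy : y ∈ interior K) : ⟪∇ F y, y⟫ = -ν := by
  have hFd : DifferentiableAt ℝ F y :=
    (hsm.differentiableOn (by norm_num)).differentiableAt (isOpen_interior.mem_nhds hy)
  have h1 : HasDerivAt (fun τ : ℝ => τ • y) y 1 := by
    simpa using (hasDerivAt_id (1:ℝ)).smul_const y
  have h2 : HasDerivAt (fun τ : ℝ => F (τ • y)) (fderiv ℝ F y y) 1 := by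
    have hFd' : HasFDerivAt F (fderiv ℝ F y) ((1:ℝ) • y) := by
      rw [one_smul]; exact hFd.hasFDerivAt
    have := hFd'.comp_hasDerivAt 1 h1
    exact this
  have h3 : HasDerivAt (fun τ : ℝ => F y - ν * Real.log τ) (-ν) 1 := by
    have := ((Real.hasDerivAt_log one_ne_zero).const_mul ν).const_sub (F y)
    simpa using this
  have heq : (fun τ : ℝ => F (τ • y)) =ᶠ[nhds 1] fun τ : ℝ => F y - ν * Real.log τ := by
    filter_upwards [eventually_gt_nhds (by norm_num : (0:ℝ) < 1)] with τ hτ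
    exact hlh y hy τ hτ
  have h4 : HasDerivAt (fun τ : ℝ => F (τ • y)) (-ν) 1 := h3.congr_of_eventuallyEq heq
  have h5 : fderiv ℝ F y y = -ν := h2.unique h4
  rw [show (∇ F y) = (toDual ℝ E).symm (fderiv ℝ F y) from rfl, toDual_symm_apply, h5]

/-- The second derivative as a quadratic form equals the Hessian form used in the
hypotheses. -/
private lemma iteratedFDeriv_two_eq_hessian (F : E → ℝ) (y h : E) :
    (iteratedFDeriv ℝ 2 F y) (fun _ => h) = ⟪fderiv ℝ (∇ F) y h, h⟫ := by
  have h1 : ∇ F = ⇑(toDual ℝ E).symm ∘ fderiv ℝ F := rfl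
  rw [h1, LinearIsometryEquiv.comp_fderiv]
  rw [iteratedFDeriv_two_apply]
  exact (toDual_symm_apply).symm

end Auxiliary

/-- for a `ν`-regular barrier `F` for the proper cone `K`, `x̄ ∈ int K`,
and every `x ∈ Δ(x̄) = {x ∈ int K : ⟪∇F(x̄), x - x̄⟫ ≥ 0}`, the local norm satisfies
`‖x‖_{x̄} = ⟪∇²F(x̄) x, x⟫^{1/2} ≤ ν`. -/
theorem local_norm_bound_on_simplex
    {E : Type*} [NormedAddCommGroup E] [InnerProductSpace ℝ E] [FiniteDimensional ℝ E]
    (K : Set E) (hK : IsProperCone K)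
    (F : E → ℝ) (ν : ℝ) (hF : IsRegularBarrier K F ν)
    (xbar : E) (hxbar : xbar ∈ interior K)
    (x : E) (hx : x ∈ interior K) (hxΔ : 0 ≤ ⟪∇ F xbar, x - xbar⟫) :
    Real.sqrt ⟪fderiv ℝ (∇ F) xbar x, x⟫ ≤ ν := by
  by_cases hx0 : x = 0
  · subst hx0
    have h0 : ⟪fderiv ℝ (∇ F) xbar (0:E), (0:E)⟫ = 0 := by simp
    rw [h0, Real.sqrt_zero]
    linarith [hF.nu_ge_one]
  -- ray membership
  have hxK : x ∈ K := interior_subset hx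
  have hγU : ∀ t : ℝ, 0 ≤ t → xbar + t • x ∈ interior K := by
    intro t ht
    rcases ht.lt_or_eq with h | h
    · exact add_mem_interior_of_cone hK.convex hK.cone hxbar (hK.cone t h x hxK)
    · rw [← h]; simpa using hxbar
  have hγd : ∀ t : ℝ, HasDerivAt (fun s : ℝ => xbar + s • x) x t := fun t => by
    simpa using ((hasDerivAt_id t).smul_const x).const_add xbar
  -- differentiability facts
  have hgradDiff : ∀ y ∈ interior K, DifferentiableAt ℝ (∇ F) y := by
    intro y hy
    have hca : ContDiffAt ℝ 3 F y := hF.smooth.contDiffAt (isOpen_interior.mem_nhds hy)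
    have h2 : ContDiffAt ℝ 2 (fderiv ℝ F) y := hca.fderiv_right (by norm_num)
    have h1 : ∇ F = ⇑(InnerProductSpace.toDual ℝ E).symm ∘ fderiv ℝ F := rfl
    rw [h1]
    exact ((InnerProductSpace.toDual ℝ E).symm.toContinuousLinearEquiv.differentiableAt).comp _
      (h2.differentiableAt (by norm_num))
  have hit2Diff : ∀ y ∈ interior K, DifferentiableAt ℝ (iteratedFDeriv ℝ 2 F) y := by
    intro y hy
    have hdo : DifferentiableOn ℝ (iteratedFDerivWithin ℝ 2 F (interior K)) (interior K) :=
      hF.smooth.differentiableOn_iteratedFDerivWithin (by norm_num)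
        isOpen_interior.uniqueDiffOn
    have heq := iteratedFDerivWithin_of_isOpen (𝕜 := ℝ) (f := F) 2 (isOpen_interior (s := K))
    exact (hdo.congr heq.symm).differentiableAt (isOpen_interior.mem_nhds hy)
  -- the three key scalar functions along the ray
  set φ : ℝ → ℝ := fun t => ⟪x, ∇ F (xbar + t • x)⟫ with hφdef
  set ψ : ℝ → ℝ := fun t => (iteratedFDeriv ℝ 2 F (xbar + t • x)) (fun _ => x) with hψdef
  set χ : ℝ → ℝ := fun t => (iteratedFDeriv ℝ 3 F (xbar + t • x)) (fun _ => x) with hχdef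
  have hψeq : ∀ t : ℝ, ψ t = ⟪fderiv ℝ (∇ F) (xbar + t • x) x, x⟫ := fun t =>
    iteratedFDeriv_two_eq_hessian F _ x
  have hφd : ∀ t, 0 ≤ t → HasDerivAt φ (ψ t) t := by
    intro t ht
    have hmem := hγU t ht
    have h1 : HasDerivAt (fun s : ℝ => ∇ F (xbar + s • x))
        ((fderiv ℝ (∇ F) (xbar + t • x)) x) t :=
      by have h := (hgradDiff _ hmem).hasFDerivAt.comp_hasDerivAt t (hγd t); exact h
    have h2 : HasDerivAt (fun s : ℝ => ⟪x, ∇ F (xbar + s • x)⟫)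
        ⟪x, (fderiv ℝ (∇ F) (xbar + t • x)) x⟫ t := by
      have := (innerSL ℝ x).hasFDerivAt.comp_hasDerivAt t h1
      exact this
    have h3 : ψ t = ⟪x, (fderiv ℝ (∇ F) (xbar + t • x)) x⟫ := by
      rw [hψeq t, real_inner_comm]
    rw [h3]
    exact h2
  have hψd : ∀ t, 0 ≤ t → HasDerivAt ψ (χ t) t := by
    intro t ht
    have hmem := hγU t ht
    have h1 : HasDerivAt (fun s : ℝ => iteratedFDeriv ℝ 2 F (xbar + s • x))
        ((fderiv ℝ (iteratedFDeriv ℝ 2 F) (xbar + t • x)) x) t :=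
      (hit2Diff _ hmem).hasFDerivAt.comp_hasDerivAt t (hγd t)
    have h2 := (ContinuousMultilinearMap.apply ℝ (fun _ : Fin 2 => E) ℝ
      (fun _ => x)).hasFDerivAt.comp_hasDerivAt t h1
    have h3 : χ t = (fderiv ℝ (iteratedFDeriv ℝ 2 F) (xbar + t • x)) x (fun _ => x) := by
      show (iteratedFDeriv ℝ 3 F (xbar + t • x)) (fun _ : Fin 3 => x) = _
      rw [iteratedFDeriv_succ_apply_left]
      congr 1
    rw [h3]
    exact h2
  have hψpos : ∀ t, 0 ≤ t → 0 < ψ t := by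
    intro t ht
    rw [hψeq t]
    exact hF.posDef _ (hγU t ht) x hx0
  have hbar : ∀ t, 0 ≤ t → φ t ^ 2 ≤ ν * ψ t := by
    intro t ht
    have hb := hF.barrier _ (hγU t ht) x
    rw [hψeq t]
    rw [show φ t = ⟪∇ F (xbar + t • x), x⟫ from (real_inner_comm x _).symm]
    exact hb
  have hχbd : ∀ t, 0 ≤ t → -(2 * Real.sqrt (ψ t) ^ 3) ≤ χ t := by
    intro t ht
    have hmem := hγU t ht
    have h1 := hF.selfConcordant _ hmem (-x)
    have h2 : (iteratedFDeriv ℝ 3 F (xbar + t • x)) (fun _ => -x) = -(χ t) := by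
      have h := (iteratedFDeriv ℝ 3 F (xbar + t • x)).map_smul_univ
        (fun _ => (-1 : ℝ)) (fun _ => x)
      simp at h
      linarith [h]
    have h3 : (iteratedFDeriv ℝ 2 F (xbar + t • x)) (fun _ => -x) = ψ t := by
      have h := (iteratedFDeriv ℝ 2 F (xbar + t • x)).map_smul_univ
        (fun _ => (-1 : ℝ)) (fun _ => x)
      simpa using h
    rw [h2, h3] at h1
    have h4 : (ψ t) ^ ((3:ℝ)/2) = Real.sqrt (ψ t) ^ 3 := by
      rw [Real.sqrt_eq_rpow, ← Real.rpow_natCast ((ψ t) ^ ((1:ℝ)/2)) 3,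
        ← Real.rpow_mul (hψpos t ht).le]
      norm_num
    rw [h4] at h1
    linarith
  -- apply the one-dimensional analysis
  have hmain := ray_analysis φ ψ χ ν hF.nu_ge_one hφd hψd hψpos hbar hχbd
  -- Euler identity and the simplex condition
  have heuler : ⟪∇ F xbar, xbar⟫ = -ν := euler_identity F ν hF.smooth hF.loghom hxbar
  have hΔ : -ν ≤ ⟪∇ F xbar, x⟫ := by
    rw [inner_sub_right] at hxΔ
    linarith [heuler, hxΔ]
  have hφ0 : φ 0 = ⟪∇ F xbar, x⟫ := by
    rw [hφdef]
    show ⟪x, ∇ F (xbar + (0:ℝ) • x)⟫ = ⟪∇ F xbar, x⟫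
    rw [zero_smul, add_zero, real_inner_comm]
  have hψ0 : ψ 0 = ⟪fderiv ℝ (∇ F) xbar x, x⟫ := by
    rw [hψeq 0, zero_smul, add_zero]
  calc Real.sqrt ⟪fderiv ℝ (∇ F) xbar x, x⟫ = Real.sqrt (ψ 0) := by rw [hψ0]
    _ ≤ -φ 0 := hmain
    _ ≤ ν := by rw [hφ0]; linarith
end

section
/- With the assumptions of the previous statement (central paths with ⟨s(t), x(t)⟩ = ν/t, and F* a ν-regular barrier for K* with s(t) = argmin along the dual path so that −∇F*(s(t)) = t x(t)), for any t₁, t₂ > 0 the dual central path satisfies the cone inequality: s(t₁) − (t₂ / (ν (t₁ + t₂))) s(t₂) ∈ K*. -/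
open RealInnerProductSpace Gradient

/-- with the central path assumptions of Statement 9 and `F*` a `ν`-regular
barrier for the dual cone `K*` along whose path `-∇F*(s(t)) = t x(t)`, the dual central
path satisfies the cone inequality `s(t₁) - (t₂/(ν(t₁+t₂))) s(t₂) ∈ K*`.
The facts used (Dikin ellipsoid inclusion and the recession-direction inequality for the
dual barrier) are taken as hypotheses. -/
theorem dual_central_path_cone_inequality
    {Ex Ey : Type*}
    [NormedAddCommGroup Ex] [InnerProductSpace ℝ Ex] [FiniteDimensional ℝ Ex]
    [NormedAddCommGroup Ey] [InnerProductSpace ℝ Ey] [FiniteDimensional ℝ Ey]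
    (A : Ex →ₗ[ℝ] Ey) (Aad : Ey →ₗ[ℝ] Ex)
    (hAad : ∀ (x : Ex) (y : Ey), ⟪A x, y⟫ = ⟪x, Aad y⟫)
    (b : Ey) (c : Ex) (ν : ℝ) (hν : 1 ≤ ν)
    (Ks : Set Ex) (hKsconv : Convex ℝ Ks)
    (hKscone : ∀ (r : ℝ), 0 < r → ∀ v ∈ Ks, r • v ∈ Ks)
    (Fs : Ex → ℝ)
    (x : ℝ → Ex) (s : ℝ → Ex) (y : ℝ → Ey)
    (hfeas : ∀ t : ℝ, 0 < t → A (x t) = b)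
    (hdfeas : ∀ t : ℝ, 0 < t → s t + Aad (y t) = c)
    (hgap : ∀ t : ℝ, 0 < t → ⟪s t, x t⟫ = ν / t)
    (hs_mem : ∀ t : ℝ, 0 < t → s t ∈ Ks)
    (hpair : ∀ t t' : ℝ, 0 < t → 0 < t' → 0 ≤ ⟪s t, x t'⟫)
    (hconj : ∀ t : ℝ, 0 < t → ∇ Fs (s t) = -(t • x t))
    (hDikin : ∀ t : ℝ, 0 < t → ∀ u : Ex,
      ⟪fderiv ℝ (∇ Fs) (s t) (u - s t), u - s t⟫ ≤ 1 → u ∈ Ks)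
    (hRec : ∀ t : ℝ, 0 < t → ∀ d ∈ Ks,
      Real.sqrt ⟪fderiv ℝ (∇ Fs) (s t) d, d⟫ ≤ -⟪∇ Fs (s t), d⟫) :
    ∀ t₁ t₂ : ℝ, 0 < t₁ → 0 < t₂ →
      s t₁ - (t₂ / (ν * (t₁ + t₂))) • s t₂ ∈ Ks := by

  intro t₁ t₂ ht₁ ht₂
  have hν0 : (0:ℝ) < ν := lt_of_lt_of_le one_pos hν
  set α : ℝ := t₂ / (ν * (t₁ + t₂)) with hαdef
  have hα : 0 < α := div_pos ht₂ (mul_pos hν0 (by linarith))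
  -- pairing identity
  have hsum : ⟪s t₂, x t₁⟫ + ⟪s t₁, x t₂⟫ = ν / t₁ + ν / t₂ := by
    have hs12 : s t₂ - s t₁ = Aad (y t₁ - y t₂) := by
      have h1 := hdfeas t₁ ht₁
      have h2 := hdfeas t₂ ht₂
      have : s t₂ - s t₁ = Aad (y t₁) - Aad (y t₂) := by
        have h3 : s t₁ + Aad (y t₁) = s t₂ + Aad (y t₂) := h1.trans h2.symm
        linear_combination (norm := module) -h3
      rw [this, map_sub]
    have hx12 : A (x t₁ - x t₂) = 0 := by
      rw [map_sub, hfeas t₁ ht₁, hfeas t₂ ht₂, sub_self]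
    have hzero : ⟪s t₂ - s t₁, x t₁ - x t₂⟫ = 0 := by
      rw [hs12, real_inner_comm, ← hAad, hx12, inner_zero_left]
    have hexp : ⟪s t₂ - s t₁, x t₁ - x t₂⟫
        = ⟪s t₂, x t₁⟫ - ⟪s t₂, x t₂⟫ - ⟪s t₁, x t₁⟫ + ⟪s t₁, x t₂⟫ := by
      simp [inner_sub_sub_self, inner_sub_left, inner_sub_right]; ring
    have g1 := hgap t₁ ht₁
    have g2 := hgap t₂ ht₂
    rw [hexp, g1, g2] at hzero
    linarith
  -- bound B := -⟪∇Fs(s t₁), s t₂⟫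
  have hgrad : -⟪∇ Fs (s t₁), s t₂⟫ = t₁ * ⟪x t₁, s t₂⟫ := by
    rw [hconj t₁ ht₁, inner_neg_left, neg_neg, real_inner_smul_left]
  have hB0 : 0 ≤ -⟪∇ Fs (s t₁), s t₂⟫ := by
    rw [hgrad]
    have := hpair t₂ t₁ ht₂ ht₁
    rw [real_inner_comm] at this
    positivity
  have hBle : -⟪∇ Fs (s t₁), s t₂⟫ ≤ ν * (t₁ + t₂) / t₂ := by
    rw [hgrad]
    have h1 : ⟪x t₁, s t₂⟫ ≤ ν / t₁ + ν / t₂ := by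
      have := hpair t₁ t₂ ht₁ ht₂
      rw [real_inner_comm]
      linarith
    have : t₁ * ⟪x t₁, s t₂⟫ ≤ t₁ * (ν / t₁ + ν / t₂) :=
      mul_le_mul_of_nonneg_left h1 ht₁.le
    calc t₁ * ⟪x t₁, s t₂⟫ ≤ t₁ * (ν / t₁ + ν / t₂) := this
      _ = ν * (t₁ + t₂) / t₂ := by field_simp; ring
  have hrec := hRec t₁ ht₁ (s t₂) (hs_mem t₂ ht₂)
  have hsq : ⟪fderiv ℝ (∇ Fs) (s t₁) (s t₂), s t₂⟫ ≤ (ν * (t₁ + t₂) / t₂) ^ 2 := by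
    set q := ⟪fderiv ℝ (∇ Fs) (s t₁) (s t₂), s t₂⟫ with hq
    have hB : Real.sqrt q ≤ ν * (t₁ + t₂) / t₂ := le_trans hrec hBle
    rcases le_or_gt q 0 with h | h
    · nlinarith [sq_nonneg (ν * (t₁ + t₂) / t₂)]
    · have := Real.sq_sqrt h.le
      nlinarith [Real.sqrt_nonneg q]
  apply hDikin t₁ ht₁
  have hu : s t₁ - α • s t₂ - s t₁ = -(α • s t₂) := by abel
  rw [hu]
  have hlin : (fderiv ℝ (∇ Fs) (s t₁)) (-(α • s t₂)) =
      -(α • (fderiv ℝ (∇ Fs) (s t₁)) (s t₂)) := by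
    rw [map_neg, map_smul]
  rw [hlin, inner_neg_neg, real_inner_smul_left, real_inner_smul_right]
  have hαB : α * (ν * (t₁ + t₂) / t₂) = 1 := by
    rw [hαdef]; field_simp
  nlinarith [sq_nonneg α, mul_le_mul_of_nonneg_left hsq (mul_pos hα hα).le]
end

section
/- Consider the feasibility set Q̂ = {(x, s, y, τ) : x̄ + x ∈ int K, s ∈ int K*, s = s̄ + τ c − A* y, A x = τ b, τ̄ > ⟨c, x⟩ − ⟨b, y⟩ + ε τ} where x̄ ∈ int K, s̄ ∈ int K*, τ̄ > 0, ε > 0. Let (x(t_ε), s(t_ε), y(t_ε)) be a strictly feasible primal-dual central path point at t_ε = ν/ε, i.e., A x(t_ε) = b, s(t_ε) + A* y(t_ε) = c, ⟨s(t_ε), x(t_ε)⟩ = ⟨c, x(t_ε)⟩ − ⟨b, y(t_ε)⟩ = ε. Then for any (x, s, y, τ) ∈ Q̂: ⟨s(t_ε), x̄ + x⟩ + ⟨s, x(t_ε)⟩ < τ̄ + ⟨s̄, x(t_ε)⟩ + ⟨s(t_ε), x̄⟩. -/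
open RealInnerProductSpace

/-- Lemma on boundedness of `Q̂`, strict inequality: for any
`(x, s, y, τ) ∈ Q̂` and a strictly feasible central path point `(x(t_ε), s(t_ε), y(t_ε))`
with duality gap `ε`, we have
`⟪s(t_ε), x̄ + x⟫ + ⟪s, x(t_ε)⟫ < τ̄ + ⟪s̄, x(t_ε)⟫ + ⟪s(t_ε), x̄⟫`. -/
theorem Qhat_bound_strict
    {Ex Ey : Type*}
    [NormedAddCommGroup Ex] [InnerProductSpace ℝ Ex] [FiniteDimensional ℝ Ex]
    [NormedAddCommGroup Ey] [InnerProductSpace ℝ Ey] [FiniteDimensional ℝ Ey]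
    (K Ks : Set Ex)
    (A : Ex →ₗ[ℝ] Ey) (Aad : Ey →ₗ[ℝ] Ex)
    (hAad : ∀ (u : Ex) (w : Ey), ⟪A u, w⟫ = ⟪u, Aad w⟫)
    (b : Ey) (c : Ex) (ε : ℝ) (hε : 0 < ε)
    (xbar sbar : Ex) (hxbar : xbar ∈ interior K) (hsbar : sbar ∈ interior Ks)
    (taubar : ℝ) (htaubar : 0 < taubar)
    -- the central path point at t_ε = ν/ε:
    (xc sc : Ex) (yc : Ey)
    (hxc : xc ∈ interior K) (hsc : sc ∈ interior Ks)
    (hcfeas : A xc = b) (hcdual : sc + Aad yc = c)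
    (hcgap : ⟪c, xc⟫ - ⟪b, yc⟫ = ε)
    -- a point of Q̂:
    (x s : Ex) (y : Ey) (τ : ℝ)
    (hxQ : xbar + x ∈ interior K) (hsQ : s ∈ interior Ks)
    (hsdef : s = sbar + τ • c - Aad y)
    (hxfeas : A x = τ • b)
    (hslack : ⟪c, x⟫ - ⟪b, y⟫ + ε * τ < taubar) :
    ⟪sc, xbar + x⟫ + ⟪s, xc⟫ < taubar + ⟪sbar, xc⟫ + ⟪sc, xbar⟫ := by
  have h1 : ⟪sc, x⟫ = ⟪c, x⟫ - τ * ⟪b, yc⟫ := by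
    have hsc' : sc = c - Aad yc := by rw [← hcdual]; abel
    rw [hsc', inner_sub_left]
    have : ⟪Aad yc, x⟫ = τ * ⟪b, yc⟫ := by
      rw [real_inner_comm, ← hAad, hxfeas, real_inner_smul_left]
    rw [this]
  have h2 : ⟪Aad y, xc⟫ = ⟪b, y⟫ := by
    rw [real_inner_comm, ← hAad, hcfeas]
  have h3 : ⟪s, xc⟫ = ⟪sbar, xc⟫ + τ * ⟪c, xc⟫ - ⟪b, y⟫ := by
    rw [hsdef, inner_sub_left, inner_add_left, real_inner_smul_left, h2]
  rw [inner_add_right, h1, h3]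
  have hg : τ * ⟪c, xc⟫ - τ * ⟪b, yc⟫ = ε * τ := by rw [← hcgap]; ring
  linarith
end

section
/- Consider the 'hot-start' target vector g = (g_x, g_y, g_τ) with g_x = s̃ + A* ỹ − c, g_y = b − A x̃, g_τ = ⟨c, x̃⟩ − ⟨b, ỹ⟩ − ε, and reference points x̄ = −∇F*(s̃), s̄ = −∇F(x̃), τ̄ = 1. Then the point u = 0 satisfies the first-order optimality conditions of the problem min{⟨g,u⟩ + Φ(u) : A x = τ b}, where Φ(x, y, τ) = F(x̄ + x) + F*(s̄ + τ c − A* y) − ln(τ̄ − ⟨c,x⟩ + ⟨b,y⟩ − ετ): specifically, ∂Φ₁/∂x(0) = A* ỹ, ∂Φ₁/∂y(0) = 0, ∂Φ₁/∂τ(0) = −⟨b, ỹ⟩, where Φ₁(u) = ⟨g, u⟩ + Φ(u), so the gradient of Φ₁ at 0 lies in the range of the adjoint of the constraint map (x,y,τ) ↦ A x − τ b. -/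
open RealInnerProductSpace Gradient

/-- with the hot-start target vector `g = (g_x, g_y, g_τ)` given by
`g_x = s̃ + A* ỹ - c`, `g_y = b - A x̃`, `g_τ = ⟪c, x̃⟫ - ⟪b, ỹ⟫ - ε`, reference points
`x̄ = -∇F*(s̃)`, `s̄ = -∇F(x̃)`, `τ̄ = 1` (expressed via the conjugacy relations
`∇F(x̄) = -s̃`, `∇F*(s̄) = -x̃`), the point `u = 0` satisfies the first-order optimality
conditions of `min {⟪g,u⟫ + Φ(u) : A x = τ b}`: the partial gradients of
`Φ₁(u) = ⟪g,u⟫ + Φ(u)` at `0` are `A* ỹ`, `0` and `-⟪b, ỹ⟫`. -/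
theorem hot_start_first_order_conditions
    {Ex Ey : Type*}
    [NormedAddCommGroup Ex] [InnerProductSpace ℝ Ex] [FiniteDimensional ℝ Ex]
    [NormedAddCommGroup Ey] [InnerProductSpace ℝ Ey] [FiniteDimensional ℝ Ey]
    (A : Ex →ₗ[ℝ] Ey) (Aad : Ey →ₗ[ℝ] Ex)
    (hAad : ∀ (u : Ex) (w : Ey), ⟪A u, w⟫ = ⟪u, Aad w⟫)
    (b : Ey) (c : Ex) (ε : ℝ) (hε : 0 < ε)
    (F Fs : Ex → ℝ)
    (xtilde : Ex) (stilde : Ex) (ytilde : Ey)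
    (xbar sbar : Ex)
    -- conjugacy relations defining the reference points x̄ = -∇F*(s̃), s̄ = -∇F(x̃):
    (hgradF : HasGradientAt F (-stilde) xbar)
    (hgradFs : HasGradientAt Fs (-xtilde) sbar)
    (gx : Ex) (gy : Ey) (gτ : ℝ)
    (hgx : gx = stilde + Aad ytilde - c)
    (hgy : gy = b - A xtilde)
    (hgτ : gτ = ⟪c, xtilde⟫ - ⟪b, ytilde⟫ - ε) :
    HasGradientAt
      (fun xx : Ex => ⟪gx, xx⟫ + (F (xbar + xx) + Fs sbar
        - Real.log (1 - ⟪c, xx⟫))) (Aad ytilde) 0 ∧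
    HasGradientAt
      (fun yy : Ey => ⟪gy, yy⟫ + (F xbar + Fs (sbar - Aad yy)
        - Real.log (1 + ⟪b, yy⟫))) (0 : Ey) 0 ∧
    HasDerivAt
      (fun τ : ℝ => gτ * τ + (F xbar + Fs (sbar + τ • c)
        - Real.log (1 - ε * τ))) (-⟪b, ytilde⟫) 0 := by
  refine ⟨?_, ?_, ?_⟩
  · rw [hasGradientAt_iff_hasFDerivAt]
    have t1 := (innerSL ℝ gx).hasFDerivAt (x := (0:Ex))
    have t2 : HasFDerivAt (fun xx : Ex => F (xbar + xx))
        (InnerProductSpace.toDual ℝ Ex (-stilde) : Ex →L[ℝ] ℝ) 0 := by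
      have hF : HasFDerivAt F (InnerProductSpace.toDual ℝ Ex (-stilde) : Ex →L[ℝ] ℝ)
          (xbar + id (0:Ex)) := by simpa using hgradF.hasFDerivAt
      have := hF.comp (0:Ex) ((hasFDerivAt_id (0:Ex)).const_add xbar)
      simpa [Function.comp_def] using this
    have t3 : HasFDerivAt (fun xx : Ex => Real.log (1 - ⟪c, xx⟫))
        (((1:ℝ)⁻¹) • (- (innerSL ℝ c))) 0 := by
      have hg : HasFDerivAt (fun xx : Ex => 1 - ⟪c, xx⟫) (-(innerSL ℝ c)) 0 := by
        simpa using ((innerSL ℝ c).hasFDerivAt (x := 0)).const_sub 1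
      have hlog : HasDerivAt Real.log ((1:ℝ)⁻¹) (1 - ⟪c, (0:Ex)⟫) := by
        simpa using Real.hasDerivAt_log (by norm_num : (1:ℝ) - ⟪c, (0:Ex)⟫ ≠ 0)
      exact hlog.comp_hasFDerivAt 0 hg
    have h := t1.add ((t2.add (hasFDerivAt_const (Fs sbar) (0:Ex))).sub t3)
    refine h.congr_fderiv ?_
    ext v
    simp [hgx, inner_add_left, inner_sub_left, inner_neg_left]
  · rw [hasGradientAt_iff_hasFDerivAt]
    have t1 := (innerSL ℝ gy).hasFDerivAt (x := (0:Ey))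
    have t3 : HasFDerivAt (fun yy : Ey => Fs (sbar - Aad yy))
        ((InnerProductSpace.toDual ℝ Ex (-xtilde) : Ex →L[ℝ] ℝ).comp
          (-(Aad.toContinuousLinearMap))) 0 := by
      have hin : HasFDerivAt (fun yy : Ey => sbar - Aad yy)
          (-(Aad.toContinuousLinearMap)) 0 := by
        simpa using (Aad.toContinuousLinearMap.hasFDerivAt (x := (0:Ey))).const_sub sbar
      have hFs : HasFDerivAt Fs (InnerProductSpace.toDual ℝ Ex (-xtilde) : Ex →L[ℝ] ℝ)
          (sbar - Aad.toContinuousLinearMap (0:Ey)) := by simpa using hgradFs.hasFDerivAt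
      have := hFs.comp (0:Ey) hin
      simpa [Function.comp_def] using this
    have t4 : HasFDerivAt (fun yy : Ey => Real.log (1 + ⟪b, yy⟫))
        (((1:ℝ)⁻¹) • (innerSL ℝ b)) 0 := by
      have hg : HasFDerivAt (fun yy : Ey => 1 + ⟪b, yy⟫) (innerSL ℝ b) 0 := by
        simpa using ((innerSL ℝ b).hasFDerivAt (x := (0:Ey))).const_add 1
      have hlog : HasDerivAt Real.log ((1:ℝ)⁻¹) (1 + ⟪b, (0:Ey)⟫) := by
        simpa using Real.hasDerivAt_log (by norm_num : (1:ℝ) + ⟪b, (0:Ey)⟫ ≠ 0)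
      exact hlog.comp_hasFDerivAt 0 hg
    have h := t1.add (((hasFDerivAt_const (F xbar) (0:Ey)).add t3).sub t4)
    refine h.congr_fderiv ?_
    ext v
    simp [hgy, inner_sub_left, inner_neg_left]
    linear_combination -hAad xtilde v
  · have t1 : HasDerivAt (fun τ : ℝ => gτ * τ) gτ 0 := by
      simpa using (hasDerivAt_id (0:ℝ)).const_mul gτ
    have t3 : HasDerivAt (fun τ : ℝ => Fs (sbar + τ • c)) ⟪-xtilde, c⟫ 0 := by
      have hin : HasDerivAt (fun τ : ℝ => sbar + τ • c) c 0 := by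
        simpa using ((hasDerivAt_id (0:ℝ)).smul_const c).const_add sbar
      have hFs : HasFDerivAt Fs (InnerProductSpace.toDual ℝ Ex (-xtilde) : Ex →L[ℝ] ℝ)
          (sbar + (0:ℝ) • c) := by simpa using hgradFs.hasFDerivAt
      have := hFs.comp_hasDerivAt 0 hin
      simpa [Function.comp_def] using this
    have t4 : HasDerivAt (fun τ : ℝ => Real.log (1 - ε * τ)) (-ε) 0 := by
      have hg : HasDerivAt (fun τ : ℝ => 1 - ε * τ) (-ε) 0 := by
        simpa using ((hasDerivAt_id (0:ℝ)).const_mul ε).const_sub 1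
      have hlog : HasDerivAt Real.log ((1:ℝ)⁻¹) (1 - ε * 0) := by
        simpa using Real.hasDerivAt_log (by norm_num : (1:ℝ) - ε * 0 ≠ 0)
      simpa [Function.comp_def] using hlog.comp 0 hg
    have h := t1.add (((hasDerivAt_const (0:ℝ) (F xbar)).add t3).sub t4)
    refine h.congr_deriv ?_
    simp [hgτ, inner_neg_left, real_inner_comm c xtilde]
    ring
end
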